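/- Let Ω ⊆ ℝ³ be open and u : Ω → ℝ³ continuously differentiable, and let τ : Ω → K be the skew-symmetric matrix field with axial vector u, i.e., τ(x) = vect⁻¹(u(x)). Then curl τ = −Ξ(grad u) on Ω, where (grad u)ᵢⱼ = ∂ⱼuᵢ is the Jacobian matrix. -/

import Mathlib

open Matrix

/-- The algebraic operator `Ξ F = Fᵀ − tr(F)·I` on 3×3 real matrices. -/
noncomputable def Xi (F : Matrix (Fin 3) (Fin 3) ℝ) : Matrix (Fin 3) (Fin 3) ℝ :=
  Fᵀ - (Matrix.trace F) • (1 : Matrix (Fin 3) (Fin 3) ℝ)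

/-- `vectInv v` is the unique skew-symmetric 3×3 matrix with `vectInv v *ᵥ w = v ×₃ w`. -/
noncomputable def vectInv (v : Fin 3 → ℝ) : Matrix (Fin 3) (Fin 3) ℝ :=
  !![0, -v 2, v 1; v 2, 0, -v 0; -v 1, v 0, 0]

/-- The partial derivative `∂ⱼ f` of a scalar field on `ℝ³`. -/
noncomputable def pd (j : Fin 3) (f : (Fin 3 → ℝ) → ℝ) (x : Fin 3 → ℝ) : ℝ :=
  fderiv ℝ f x (Pi.single j 1)

/-- The curl of a vector field `u : ℝ³ → ℝ³`. -/
noncomputable def curlVec (u : (Fin 3 → ℝ) → (Fin 3 → ℝ)) (x : Fin 3 → ℝ) : Fin 3 → ℝ :=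
  ![pd 1 (fun y => u y 2) x - pd 2 (fun y => u y 1) x,
    pd 2 (fun y => u y 0) x - pd 0 (fun y => u y 2) x,
    pd 0 (fun y => u y 1) x - pd 1 (fun y => u y 0) x]

/-- The row-wise curl of a matrix field. -/
noncomputable def curlMat (τ : (Fin 3 → ℝ) → Matrix (Fin 3) (Fin 3) ℝ)
    (x : Fin 3 → ℝ) : Matrix (Fin 3) (Fin 3) ℝ :=
  Matrix.of fun i j => curlVec (fun y => τ y i) x j

/-- The Jacobian matrix `(grad u)ᵢⱼ = ∂ⱼuᵢ` of a vector field `u : ℝ³ → ℝ³`. -/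
noncomputable def gradM (u : (Fin 3 → ℝ) → (Fin 3 → ℝ)) (x : Fin 3 → ℝ) :
    Matrix (Fin 3) (Fin 3) ℝ :=
  Matrix.of fun i j => pd j (fun y => u y i) x

/-! The entries of `vect⁻¹(u)` are `0` and `±uₖ`, so each entry of `curl τ` is a signed
difference of partials `∂ⱼuᵢ`; comparing the nine entries with `tr(grad u) I − (grad u)ᵀ`
gives the identity. -/

theorem pd_neg (j : Fin 3) (f : (Fin 3 → ℝ) → ℝ) (x : Fin 3 → ℝ) :
    pd j (fun y => -f y) x = -pd j f x := by
  simp only [pd, fderiv_fun_neg, _root_.neg_apply]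

theorem pd_const (j : Fin 3) (c : ℝ) (x : Fin 3 → ℝ) : pd j (fun _ => c) x = 0 := by
  simp only [pd, fderiv_const_apply, _root_.zero_apply]

theorem curl_skew_field_general (Ω : Set (Fin 3 → ℝ))
    (u : (Fin 3 → ℝ) → (Fin 3 → ℝ)) :
    ∀ x ∈ Ω, curlMat (fun y => vectInv (u y)) x = -(Xi (gradM u x)) := by
  intro x _
  ext i j
  fin_cases i <;> fin_cases j <;>
    simp [curlMat, curlVec, gradM, Xi, vectInv, trace, Fin.sum_univ_three, one_apply,
      pd_neg, pd_const] <;> ring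

/-- If `u : Ω → ℝ³` is `C¹` on an open set `Ω ⊆ ℝ³` and `τ = vect⁻¹(u)` is the
skew-symmetric matrix field with axial vector `u`, then `curl τ = −Ξ(grad u)` on `Ω`. -/
theorem curl_skew_field (Ω : Set (Fin 3 → ℝ)) (hΩ : IsOpen Ω)
    (u : (Fin 3 → ℝ) → (Fin 3 → ℝ)) (hu : ContDiffOn ℝ 1 u Ω) :
    ∀ x ∈ Ω, curlMat (fun y => vectInv (u y)) x = -(Xi (gradM u x)) :=
  curl_skew_field_general Ω u
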